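/- Let V be a finite-dimensional vector space over 𝕂 (𝕂 = ℝ or ℂ) with dim V ≥ 2, let f be a continuous subnorm on V, fix a nonzero a₀ ∈ V, and let W = {α·a₀ : α ∈ 𝕂} be the one-dimensional subspace generated by a₀. For a real number κ > 1, define g_κ(a) = κ·f(a) if a ∈ W and g_κ(a) = f(a) if a ∈ V ∖ W. Then g_κ is a subnorm on V, and g_κ is discontinuous at a₀. -/

import Mathlib

/-!
Off the line `W = 𝕂 ∙ a₀` the function `g` agrees with the continuous `f`, and in dimension at
least two the proper subspace `W` has empty interior, so `a₀` is a limit of points off `W`.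
Continuity of `g` at `a₀` would then force `κ * f a₀ = g a₀ = f a₀`, impossible as `f a₀ > 0`.
Positivity and homogeneity of `g` hold because `W` and its complement are stable under
nonzero scalars.
-/

open Filter Topology Set Module

theorem Submodule.span_singleton_ne_top_of_two_le_finrank {R M : Type*} [Ring R]
    [StrongRankCondition R] [AddCommGroup M] [Module R M] (h : 2 ≤ finrank R M) (a : M) :
    R ∙ a ≠ ⊤ := by
  intro htop
  have hle := finrank_span_le_card (R := R) ({a} : Set M)
  rw [htop, finrank_top, toFinset_singleton, Finset.card_singleton] at hle
  omega

theorem Submodule.dense_compl_of_ne_top {R M : Type*} [Ring R] [TopologicalSpace R]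
    [TopologicalSpace M] [AddCommGroup M] [ContinuousAdd M] [Module R M] [ContinuousSMul R M]
    [NeBot (𝓝[{x : R | IsUnit x}] 0)] {W : Submodule R M} (hW : W ≠ ⊤) :
    Dense (W : Set M)ᶜ :=
  interior_eq_empty_iff_dense_compl.1 <|
    not_nonempty_iff_eq_empty.1 fun hne ↦ hW (W.eq_top_of_nonempty_interior' hne)

theorem not_continuousAt_of_eqOn_compl {X Y : Type*} [TopologicalSpace X] [TopologicalSpace Y]
    [T2Space Y] {f g : X → Y} {s : Set X} {x : X} (hx : x ∈ closure sᶜ) (hgf : EqOn g f sᶜ)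
    (hf : ContinuousAt f x) (hne : g x ≠ f x) : ¬ContinuousAt g x := by
  intro hg
  have := mem_closure_iff_nhdsWithin_neBot.1 hx
  have hg_lim : Tendsto g (𝓝[sᶜ] x) (𝓝 (g x)) := hg.tendsto.mono_left nhdsWithin_le_nhds
  have hf_lim : Tendsto g (𝓝[sᶜ] x) (𝓝 (f x)) :=
    (hf.tendsto.mono_left nhdsWithin_le_nhds).congr' (eventuallyEq_nhdsWithin_of_eqOn hgf).symm
  exact hne (tendsto_nhds_unique hg_lim hf_lim)

section Rescale

variable {𝕂 V : Type*} [NormedDivisionRing 𝕂] [AddCommGroup V] [Module 𝕂 V]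
  {W : Submodule 𝕂 V} {f g : V → ℝ} {κ : ℝ}

theorem pos_of_eq_mul_on_of_eq_off (hκ : 0 < κ) (hf : ∀ a : V, a ≠ 0 → 0 < f a)
    (hg_on : ∀ a ∈ W, g a = κ * f a) (hg_off : ∀ a ∉ W, g a = f a) {a : V} (ha : a ≠ 0) :
    0 < g a := by
  by_cases haW : a ∈ W
  · rw [hg_on a haW]
    exact mul_pos hκ (hf a ha)
  · rw [hg_off a haW]
    exact hf a ha

theorem smul_of_eq_mul_on_of_eq_off (hf : ∀ (α : 𝕂) (a : V), f (α • a) = ‖α‖ * f a)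
    (hg_on : ∀ a ∈ W, g a = κ * f a) (hg_off : ∀ a ∉ W, g a = f a) (α : 𝕂) (a : V) :
    g (α • a) = ‖α‖ * g a := by
  rcases eq_or_ne α 0 with rfl | hα
  · have hf0 : f 0 = 0 := by simpa using hf 0 0
    rw [zero_smul, hg_on 0 W.zero_mem, hf0, norm_zero, mul_zero, zero_mul]
  by_cases haW : a ∈ W
  · rw [hg_on _ (W.smul_mem α haW), hg_on a haW, hf]
    ring
  · rw [hg_off _ (by rwa [W.smul_mem_iff hα]), hg_off a haW, hf]

end Rescale

theorem scaled_subnorm_discontinuous_general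
    {𝕂 : Type*} [RCLike 𝕂] {V : Type*} [NormedAddCommGroup V] [NormedSpace 𝕂 V]
    (hdim : 2 ≤ Module.finrank 𝕂 V)
    (f : V → ℝ)
    (hf_pos : ∀ a : V, a ≠ 0 → 0 < f a)
    (hf_smul : ∀ (α : 𝕂) (a : V), f (α • a) = ‖α‖ * f a)
    (hf_cont : Continuous f)
    (a₀ : V) (ha₀ : a₀ ≠ 0) (κ : ℝ) (hκ : 1 < κ)
    (g : V → ℝ)
    (hg_on : ∀ a ∈ Submodule.span 𝕂 {a₀}, g a = κ * f a)
    (hg_off : ∀ a ∉ Submodule.span 𝕂 {a₀}, g a = f a) :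
    (∀ a : V, a ≠ 0 → 0 < g a) ∧
      (∀ (α : 𝕂) (a : V), g (α • a) = ‖α‖ * g a) ∧
      ¬ ContinuousAt g a₀ := by
  refine ⟨fun a ↦ pos_of_eq_mul_on_of_eq_off (by linarith) hf_pos hg_on hg_off,
    smul_of_eq_mul_on_of_eq_off hf_smul hg_on hg_off, ?_⟩
  have hdense := Submodule.dense_compl_of_ne_top
    (Submodule.span_singleton_ne_top_of_two_le_finrank hdim a₀)
  have hga₀ : g a₀ = κ * f a₀ := hg_on a₀ (Submodule.mem_span_singleton_self a₀)
  have hfa₀ := hf_pos a₀ ha₀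
  exact not_continuousAt_of_eqOn_compl (hdense a₀) hg_off
    hf_cont.continuousAt (by rw [hga₀]; nlinarith)

/-- Let `f` be a continuous subnorm on a finite-dimensional vector space `V` over `𝕂`
(`𝕂 = ℝ` or `ℂ`) with `dim V ≥ 2`, let `a₀ ≠ 0`, `W = span {a₀}`, and `κ > 1`.
Then `g`, equal to `κ * f` on `W` and to `f` off `W`, is a subnorm on `V`
which is discontinuous at `a₀`. -/
theorem scaled_subnorm_discontinuous
    {𝕂 : Type*} [RCLike 𝕂] {V : Type*} [NormedAddCommGroup V] [NormedSpace 𝕂 V]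
    [FiniteDimensional 𝕂 V] (hdim : 2 ≤ Module.finrank 𝕂 V)
    (f : V → ℝ)
    (hf_pos : ∀ a : V, a ≠ 0 → 0 < f a)
    (hf_smul : ∀ (α : 𝕂) (a : V), f (α • a) = ‖α‖ * f a)
    (hf_cont : Continuous f)
    (a₀ : V) (ha₀ : a₀ ≠ 0) (κ : ℝ) (hκ : 1 < κ)
    (g : V → ℝ)
    (hg_on : ∀ a ∈ Submodule.span 𝕂 {a₀}, g a = κ * f a)
    (hg_off : ∀ a ∉ Submodule.span 𝕂 {a₀}, g a = f a) :
    (∀ a : V, a ≠ 0 → 0 < g a) ∧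
      (∀ (α : 𝕂) (a : V), g (α • a) = ‖α‖ * g a) ∧
      ¬ ContinuousAt g a₀ :=
  scaled_subnorm_discontinuous_general hdim f hf_pos hf_smul hf_cont a₀ ha₀ κ hκ g hg_on hg_off
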